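/- The function h*(x) = 12(x − 1/2)² is an invariant probability density for the map f on [0,1] defined by f(x) = (1/8 + 2(x−1/2)³)^{1/3} + 1/2 for x ∈ [0, 1/2] and f(x) = (1/8 − 2(x−1/2)³)^{1/3} + 1/2 for x ∈ [1/2, 1]; that is, the measure dμ = 12(x−1/2)² dλ satisfies f_#μ = μ. -/

import Mathlib

/-!
The distribution function `G x = 4 (x - 1/2)³ + 1/2` of `μ` has derivative `12 (x - 1/2)²`, so
by the change of variables formula `G` pushes `μ` forward to Lebesgue measure on `[0,1]`. Moreover
`G ∘ f = T ∘ G` for the tent map `T`, which preserves Lebesgue measure on `[0,1]` because each of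
its branches maps a half of `[0,1]` affinely onto `[0,1]` with slope `±2`. Hence
`G_* (f_* μ) = T_* (G_* μ) = G_* μ`, and `f_* μ = μ` since `G` is injective.
-/

open MeasureTheory

/-- The real cube root. -/
noncomputable def cbrt (y : ℝ) : ℝ :=
  if 0 ≤ y then y ^ ((1:ℝ) / 3) else -((-y) ^ ((1:ℝ) / 3))

open Set

lemma cbrt_pow_three (y : ℝ) : cbrt y ^ 3 = y := by
  have rpow_cube {z : ℝ} (hz : 0 ≤ z) : (z ^ ((1:ℝ) / 3)) ^ 3 = z := by
    rw [← Real.rpow_natCast, ← Real.rpow_mul hz]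
    norm_num
  unfold cbrt
  split_ifs with hy
  · exact rpow_cube hy
  · rw [Odd.neg_pow (by decide), rpow_cube (by linarith), neg_neg]

lemma measurable_cbrt : Measurable cbrt :=
  Measurable.ite (measurableSet_le measurable_const measurable_id)
    (Real.continuous_rpow_const (by norm_num)).measurable
    ((Real.continuous_rpow_const (by norm_num)).measurable.comp measurable_neg).neg

namespace MeasureTheory

theorem map_withDensity_abs_deriv_eq_volume {s : Set ℝ} {f f' : ℝ → ℝ}
    (hs : MeasurableSet s) (hf' : ∀ x ∈ s, HasDerivWithinAt f (f' x) s x) (hf : InjOn f s) :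
    ((volume.restrict s).withDensity fun x => ENNReal.ofReal |f' x|).map f =
      volume.restrict (f '' s) := by
  simpa only [ContinuousLinearMap.det_toSpanSingleton] using
    map_withDensity_abs_det_fderiv_eq_addHaar volume hs.nullMeasurableSet
      (fun x hx => (hf' x hx).hasFDerivWithinAt) hf

theorem map_volume_restrict_of_hasDerivWithinAt_const {s : Set ℝ} {f : ℝ → ℝ} {c : ℝ}
    (hc : c ≠ 0) (hs : MeasurableSet s) (hf' : ∀ x ∈ s, HasDerivWithinAt f c s x)
    (hf : InjOn f s) :
    (volume.restrict s).map f = ENNReal.ofReal |c|⁻¹ • volume.restrict (f '' s) := by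
  have h := map_withDensity_abs_deriv_eq_volume hs hf' hf
  rw [withDensity_const, Measure.map_smul] at h
  rw [← h, smul_smul, ← ENNReal.ofReal_mul (by positivity), inv_mul_cancel₀ (by positivity),
    ENNReal.ofReal_one, one_smul]

end MeasureTheory

noncomputable def tentMap (t : ℝ) : ℝ := if t ≤ 1 / 2 then 2 * t else 2 - 2 * t

lemma measurable_tentMap : Measurable tentMap :=
  Measurable.ite (measurableSet_le measurable_id measurable_const)
    (measurable_const.mul measurable_id) (measurable_const.sub (measurable_const.mul measurable_id))

lemma map_tentMap_restrict_Icc_zero_half :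
    (volume.restrict (Icc (0:ℝ) (1 / 2))).map tentMap =
      ENNReal.ofReal 2⁻¹ • volume.restrict (Icc 0 1) := by
  have hEq : EqOn tentMap (2 * ·) (Icc 0 (1 / 2)) := fun t ht => if_pos ht.2
  have hImage : (2 * ·) '' Icc (0:ℝ) (1 / 2) = Icc 0 1 := by
    rw [image_mul_left_Icc zero_le_two (by norm_num)]
    norm_num
  rw [Measure.map_congr (hEq.aeEq_restrict measurableSet_Icc),
    map_volume_restrict_of_hasDerivWithinAt_const two_ne_zero measurableSet_Icc
      (fun t _ => ((hasDerivAt_id' t).const_mul 2).hasDerivWithinAt.congr_deriv (mul_one 2))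
      (mul_right_injective₀ two_ne_zero).injOn, hImage, abs_two]

lemma map_tentMap_restrict_Icc_half_one :
    (volume.restrict (Icc (1 / 2 : ℝ) 1)).map tentMap =
      ENNReal.ofReal 2⁻¹ • volume.restrict (Icc 0 1) := by
  have hEq : EqOn tentMap (2 - 2 * ·) (Icc (1 / 2) 1) := fun t ht => by
    unfold tentMap
    split_ifs <;> linarith [ht.1]
  have hAnti : Antitone fun t : ℝ => 2 - 2 * t := fun a b h => by linarith
  have hImage : (2 - 2 * ·) '' Icc (1 / 2 : ℝ) 1 = Icc 0 1 := by
    rw [(by fun_prop : Continuous fun t : ℝ => 2 - 2 * t).continuousOn.image_Icc_of_antitoneOn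
      (by norm_num) (hAnti.antitoneOn _)]
    norm_num
  rw [Measure.map_congr (hEq.aeEq_restrict measurableSet_Icc),
    map_volume_restrict_of_hasDerivWithinAt_const (c := -2) (by norm_num) measurableSet_Icc
      (fun t _ => (((hasDerivAt_id' t).const_mul 2).const_sub 2).hasDerivWithinAt.congr_deriv
        (by simp))
      (fun a _ b _ h => by simpa using h), hImage]
  norm_num

lemma volume_restrict_Icc_zero_one_eq_add :
    volume.restrict (Icc (0:ℝ) 1) =
      volume.restrict (Icc 0 (1 / 2)) + volume.restrict (Icc (1 / 2) 1) := by
  rw [← Icc_union_Icc_eq_Icc (b := 1 / 2) (by norm_num) (by norm_num)]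
  refine Measure.restrict_union₀ ?_ measurableSet_Icc.nullMeasurableSet
  rw [AEDisjoint, Icc_inter_Icc]
  simp

lemma map_tentMap_volume_Icc :
    (volume.restrict (Icc (0:ℝ) 1)).map tentMap = volume.restrict (Icc 0 1) := by
  rw [volume_restrict_Icc_zero_one_eq_add, Measure.map_add _ _ measurable_tentMap,
    map_tentMap_restrict_Icc_zero_half, map_tentMap_restrict_Icc_half_one, ← add_smul,
    ← volume_restrict_Icc_zero_one_eq_add, ← ENNReal.ofReal_add (by norm_num) (by norm_num)]
  norm_num

noncomputable def cubicCdf (x : ℝ) : ℝ := 4 * (x - 1 / 2) ^ 3 + 1 / 2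

lemma cubicCdf_strictMono : StrictMono cubicCdf := fun a b hab => by
  have := Odd.strictMono_pow (R := ℝ) (by decide : Odd 3) (sub_lt_sub_right hab (1 / 2))
  unfold cubicCdf; linarith

lemma continuous_cubicCdf : Continuous cubicCdf := by
  unfold cubicCdf; fun_prop

lemma measurableEmbedding_cubicCdf : MeasurableEmbedding cubicCdf :=
  continuous_cubicCdf.measurableEmbedding cubicCdf_strictMono.injective

lemma hasDerivAt_cubicCdf (x : ℝ) : HasDerivAt cubicCdf (12 * (x - 1 / 2) ^ 2) x := by
  have := ((((hasDerivAt_id' x).sub_const (1 / 2)).pow 3).const_mul 4).add_const (1 / 2)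
  exact this.congr_deriv (by norm_num; ring)

lemma image_cubicCdf_Icc : cubicCdf '' Icc 0 1 = Icc 0 1 := by
  rw [continuous_cubicCdf.continuousOn.image_Icc_of_monotoneOn zero_le_one
    (cubicCdf_strictMono.monotone.monotoneOn _)]
  norm_num [cubicCdf]

noncomputable def cubicMeasure : Measure ℝ :=
  (volume.restrict (Icc (0:ℝ) 1)).withDensity fun x => ENNReal.ofReal (12 * (x - 1 / 2) ^ 2)

lemma map_cubicCdf_cubicMeasure : cubicMeasure.map cubicCdf = volume.restrict (Icc 0 1) := by
  have h := map_withDensity_abs_deriv_eq_volume (s := Icc 0 1) measurableSet_Icc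
    (fun x _ => (hasDerivAt_cubicCdf x).hasDerivWithinAt) cubicCdf_strictMono.injective.injOn
  have hDensity : (fun x : ℝ => ENNReal.ofReal |12 * (x - 1 / 2) ^ 2|) =
      fun x => ENNReal.ofReal (12 * (x - 1 / 2) ^ 2) :=
    funext fun x => by rw [abs_of_nonneg (by positivity)]
  rwa [hDensity, image_cubicCdf_Icc] at h

noncomputable def cubicTentMap (x : ℝ) : ℝ :=
  if x ≤ 1 / 2 then cbrt (1 / 8 + 2 * (x - 1 / 2) ^ 3) + 1 / 2
  else cbrt (1 / 8 - 2 * (x - 1 / 2) ^ 3) + 1 / 2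

lemma measurable_cubicTentMap : Measurable cubicTentMap := by
  unfold cubicTentMap
  refine Measurable.ite (measurableSet_le measurable_id measurable_const) ?_ ?_ <;>
  · exact (measurable_cbrt.comp (by fun_prop)).add_const _

lemma cubicCdf_le_half_iff {x : ℝ} : cubicCdf x ≤ 1 / 2 ↔ x ≤ 1 / 2 := by
  conv_lhs => rw [show (1 / 2 : ℝ) = cubicCdf (1 / 2) by norm_num [cubicCdf]]
  exact cubicCdf_strictMono.le_iff_le

lemma cubicCdf_comp_cubicTentMap : cubicCdf ∘ cubicTentMap = tentMap ∘ cubicCdf := by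
  have cubicCdf_cbrt (y : ℝ) : cubicCdf (cbrt y + 1 / 2) = 4 * y + 1 / 2 := by
    simp [cubicCdf, cbrt_pow_three]
  funext x
  simp only [Function.comp_apply, cubicTentMap, tentMap, cubicCdf_le_half_iff]
  split_ifs <;> rw [cubicCdf_cbrt, cubicCdf] <;> ring

theorem stmt19 :
    IsProbabilityMeasure
      ((volume.restrict (Set.Icc (0:ℝ) 1)).withDensity
        (fun x => ENNReal.ofReal (12 * (x - 1 / 2) ^ 2))) ∧
    ((volume.restrict (Set.Icc (0:ℝ) 1)).withDensity
        (fun x => ENNReal.ofReal (12 * (x - 1 / 2) ^ 2))).map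
      (fun x => if x ≤ 1 / 2 then cbrt (1 / 8 + 2 * (x - 1 / 2) ^ 3) + 1 / 2
                else cbrt (1 / 8 - 2 * (x - 1 / 2) ^ 3) + 1 / 2)
    = (volume.restrict (Set.Icc (0:ℝ) 1)).withDensity
        (fun x => ENNReal.ofReal (12 * (x - 1 / 2) ^ 2)) := by
  show IsProbabilityMeasure cubicMeasure ∧ cubicMeasure.map cubicTentMap = cubicMeasure
  refine ⟨?_, measurableEmbedding_cubicCdf.map_injective ?_⟩
  · rw [← Measure.isProbabilityMeasure_map_iff
      measurableEmbedding_cubicCdf.measurable.aemeasurable, map_cubicCdf_cubicMeasure]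
    exact ⟨by simp⟩
  · rw [Measure.map_map measurableEmbedding_cubicCdf.measurable measurable_cubicTentMap,
      cubicCdf_comp_cubicTentMap, ← Measure.map_map measurable_tentMap
      measurableEmbedding_cubicCdf.measurable, map_cubicCdf_cubicMeasure, map_tentMap_volume_Icc]
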